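/- For integers ℓ ≥ 2 let n_ℓ := ℓ·⌈(ln ℓ)²⌉ + 1 and θ_ℓ := π/(2(n_ℓ−1)). Then √2·∑_{ℓ=2}^∞ (n_ℓ − 1)·(1 − cos(θ_ℓ)) ≤ 6. In particular, √2·∑_{ℓ=2}^∞ π²/(8·ℓ·⌈(ln ℓ)²⌉) ≤ 6. -/

import Mathlib

/-!
Since `1 - cos x ≤ x² / 2`, each term `(n_ℓ - 1)(1 - cos θ_ℓ)` is at most `π² / (8 ℓ ⌈(ln ℓ)²⌉)`,
so both sums are controlled by `π²/8 · ∑_{ℓ ≥ 2} 1 / (ℓ ⌈(ln ℓ)²⌉)`. From `ℓ ≥ 3` on this series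
telescopes: `ln ℓ - ln (ℓ - 1) ≥ 1/ℓ` gives `1 / (ℓ (ln ℓ)²) ≤ 1 / ln (ℓ - 1) - 1 / ln ℓ`, so the
series is at most `1/2 + 1 / ln 2 < 5/2`, and `√2 · π²/8 · 5/2 < 6`.
-/

open scoped BigOperators ENNReal NNReal

noncomputable section

namespace Stmt10

/-- `n_ℓ := ℓ·⌈(ln ℓ)²⌉ + 1`. -/
def nl (l : ℕ) : ℕ := l * ⌈(Real.log l) ^ 2⌉₊ + 1

/-- `θ_ℓ := π / (2(n_ℓ − 1))`. -/
def θ (l : ℕ) : ℝ := Real.pi / (2 * ((nl l : ℝ) - 1))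

open Real Finset

lemma mul_one_sub_cos_pi_div_le {d : ℝ} (hd : 0 ≤ d) :
    d * (1 - cos (π / (2 * d))) ≤ π ^ 2 / (8 * d) := by
  calc d * (1 - cos (π / (2 * d))) ≤ d * ((π / (2 * d)) ^ 2 / 2) :=
        mul_le_mul_of_nonneg_left (by linarith [one_sub_sq_div_two_le_cos (x := π / (2 * d))]) hd
    _ = π ^ 2 / (8 * d) := by
        rcases hd.eq_or_lt with rfl | hd
        · simp
        · field_simp; ring

lemma nl_sub_one (l : ℕ) : (nl l : ℝ) - 1 = l * ⌈log l ^ 2⌉₊ := by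
  simp [nl]

lemma nl_sub_one_mul_one_sub_cos_le (l : ℕ) :
    ((nl l : ℝ) - 1) * (1 - cos (θ l)) ≤ π ^ 2 / (8 * l * ⌈log l ^ 2⌉₊) := by
  calc ((nl l : ℝ) - 1) * (1 - cos (θ l)) ≤ π ^ 2 / (8 * ((nl l : ℝ) - 1)) :=
        mul_one_sub_cos_pi_div_le (by rw [nl_sub_one]; positivity)
    _ = π ^ 2 / (8 * l * ⌈log l ^ 2⌉₊) := by rw [nl_sub_one, mul_assoc]

lemma one_div_mul_log_sq_le_sub {x : ℝ} (hx : 2 < x) :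
    1 / (x * log x ^ 2) ≤ 1 / log (x - 1) - 1 / log x := by
  have hlog_pred : 0 < log (x - 1) := log_pos (by linarith)
  have hlog_mono : log (x - 1) ≤ log x := log_le_log (by linarith) (by linarith)
  have hlog : 0 < log x := hlog_pred.trans_le hlog_mono
  have hgap : 1 / x ≤ log x - log (x - 1) := by
    have h := one_sub_inv_le_log_of_pos (x := x / (x - 1)) (div_pos (by linarith) (by linarith))
    rw [log_div (by linarith) (by linarith), inv_div] at h
    calc 1 / x = 1 - (x - 1) / x := by field_simp; ring
      _ ≤ log x - log (x - 1) := h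
  calc 1 / (x * log x ^ 2) = (1 / x) / (log x * log x) := by ring
    _ ≤ (log x - log (x - 1)) / (log (x - 1) * log x) :=
        div_le_div₀ (by linarith) hgap
          (by positivity) (mul_le_mul_of_nonneg_right hlog_mono (by linarith))
    _ = 1 / log (x - 1) - 1 / log x := by field_simp

def invMulCeilLogSq (l : ℕ) : ℝ := if 2 ≤ l then 1 / (l * ⌈log l ^ 2⌉₊) else 0

lemma invMulCeilLogSq_nonneg (l : ℕ) : 0 ≤ invMulCeilLogSq l := by
  unfold invMulCeilLogSq; split_ifs <;> positivity

lemma one_le_ceil_log_sq {l : ℕ} (hl : 2 ≤ l) : 1 ≤ ⌈log l ^ 2⌉₊ :=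
  Nat.one_le_ceil_iff.mpr (pow_pos (log_pos (by exact_mod_cast hl)) 2)

lemma invMulCeilLogSq_two_le : invMulCeilLogSq 2 ≤ 1 / 2 := by
  have hm : (1 : ℝ) ≤ ⌈log (2 : ℕ) ^ 2⌉₊ := by exact_mod_cast one_le_ceil_log_sq le_rfl
  rw [invMulCeilLogSq, if_pos le_rfl]
  gcongr
  push_cast at hm ⊢
  linarith

lemma invMulCeilLogSq_le_sub {l : ℕ} (hl : 3 ≤ l) :
    invMulCeilLogSq l ≤ 1 / log ((l : ℝ) - 1) - 1 / log l := by
  have hl' : (3 : ℝ) ≤ l := by exact_mod_cast hl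
  rw [invMulCeilLogSq, if_pos (by omega)]
  have hlog : 0 < log l := log_pos (by linarith)
  refine le_trans ?_ (one_div_mul_log_sq_le_sub (by linarith))
  exact one_div_le_one_div_of_le (by positivity) (by gcongr; exact Nat.le_ceil _)

lemma sum_range_invMulCeilLogSq_le (N : ℕ) :
    ∑ l ∈ range N, invMulCeilLogSq l ≤ 1 / 2 + 1 / log 2 := by
  set u : ℕ → ℝ := fun l => 1 / log ((l : ℝ) + 2)
  have hstep (l : ℕ) : invMulCeilLogSq (3 + l) ≤ u l - u (l + 1) := by
    convert invMulCeilLogSq_le_sub (l := 3 + l) (by omega) using 4 <;> push_cast <;> ring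
  have hu (l : ℕ) : 0 ≤ u l := one_div_nonneg.2 (log_nonneg (by linarith [l.cast_nonneg (α := ℝ)]))
  calc ∑ l ∈ range N, invMulCeilLogSq l ≤ ∑ l ∈ range (3 + N), invMulCeilLogSq l :=
        sum_le_sum_of_subset_of_nonneg (range_subset_range.mpr (by omega))
          fun l _ _ => invMulCeilLogSq_nonneg l
    _ = ∑ l ∈ range 3, invMulCeilLogSq l + ∑ l ∈ range N, invMulCeilLogSq (3 + l) :=
        sum_range_add _ _ _
    _ ≤ 1 / 2 + ∑ l ∈ range N, (u l - u (l + 1)) := by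
        gcongr with l
        · simpa [sum_range_succ, invMulCeilLogSq] using invMulCeilLogSq_two_le
        · exact hstep l
    _ = 1 / 2 + (u 0 - u N) := by rw [sum_range_sub']
    _ ≤ 1 / 2 + 1 / log 2 := by linarith [hu N, show u 0 = 1 / log 2 by norm_num [u]]

lemma tsum_pi_sq_div_le :
    (∑' l : ℕ, if 2 ≤ l then ENNReal.ofReal (π ^ 2 / (8 * l * ⌈log l ^ 2⌉₊)) else 0) ≤
      ENNReal.ofReal (π ^ 2 / 8 * (1 / 2 + 1 / log 2)) := by
  have hterm (l : ℕ) :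
      (if 2 ≤ l then ENNReal.ofReal (π ^ 2 / (8 * l * ⌈log l ^ 2⌉₊)) else 0) =
        ENNReal.ofReal (π ^ 2 / 8 * invMulCeilLogSq l) := by
    unfold invMulCeilLogSq
    split_ifs
    · congr 1; field_simp
    · simp
  have hnonneg (l : ℕ) : 0 ≤ π ^ 2 / 8 * invMulCeilLogSq l :=
    mul_nonneg (by positivity) (invMulCeilLogSq_nonneg l)
  have hpartial (N : ℕ) :
      ∑ l ∈ range N, π ^ 2 / 8 * invMulCeilLogSq l ≤ π ^ 2 / 8 * (1 / 2 + 1 / log 2) := by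
    rw [← mul_sum]
    gcongr
    exact sum_range_invMulCeilLogSq_le N
  rw [tsum_congr hterm, ← ENNReal.ofReal_tsum_of_nonneg hnonneg
    (summable_of_sum_range_le hnonneg hpartial)]
  exact ENNReal.ofReal_le_ofReal (Real.tsum_le_of_sum_range_le hnonneg hpartial)

lemma sqrt_two_mul_pi_sq_div_eight_mul_le : √2 * (π ^ 2 / 8 * (1 / 2 + 1 / log 2)) ≤ 6 := by
  have hsqrt : √2 ≤ 3 / 2 := ((sqrt_lt' (by norm_num)).mpr (by norm_num)).le
  have hlog : 1 / log 2 ≤ 2 := by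
    rw [div_le_iff₀ (log_pos one_lt_two)]; linarith [log_two_gt_d9]
  have hpi : π ^ 2 ≤ 3.15 ^ 2 := pow_le_pow_left₀ pi_pos.le pi_lt_d2.le 2
  calc √2 * (π ^ 2 / 8 * (1 / 2 + 1 / log 2)) ≤ 3 / 2 * (3.15 ^ 2 / 8 * (1 / 2 + 2)) := by
        gcongr
    _ ≤ 6 := by norm_num

theorem stmt10 :
    ENNReal.ofReal (Real.sqrt 2) *
        (∑' l : ℕ, if 2 ≤ l then
          ENNReal.ofReal (((nl l : ℝ) - 1) * (1 - Real.cos (θ l))) else 0) ≤ 6 ∧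
    ENNReal.ofReal (Real.sqrt 2) *
        (∑' l : ℕ, if 2 ≤ l then
          ENNReal.ofReal (Real.pi ^ 2 / (8 * l * (⌈(Real.log l) ^ 2⌉₊ : ℝ))) else 0) ≤ 6 := by
  have hdom : (∑' l : ℕ, if 2 ≤ l then
        ENNReal.ofReal (((nl l : ℝ) - 1) * (1 - cos (θ l))) else 0) ≤
      ∑' l : ℕ, if 2 ≤ l then ENNReal.ofReal (π ^ 2 / (8 * l * ⌈log l ^ 2⌉₊)) else 0 :=
    ENNReal.tsum_le_tsum fun l => by
      split_ifs
      exacts [ENNReal.ofReal_le_ofReal (nl_sub_one_mul_one_sub_cos_le l), le_rfl]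
  have hbound : ENNReal.ofReal √2 *
      (∑' l : ℕ, if 2 ≤ l then ENNReal.ofReal (π ^ 2 / (8 * l * ⌈log l ^ 2⌉₊)) else 0) ≤ 6 :=
    calc _ ≤ ENNReal.ofReal √2 * ENNReal.ofReal (π ^ 2 / 8 * (1 / 2 + 1 / log 2)) := by
          gcongr; exact tsum_pi_sq_div_le
      _ = ENNReal.ofReal (√2 * (π ^ 2 / 8 * (1 / 2 + 1 / log 2))) :=
          (ENNReal.ofReal_mul (sqrt_nonneg 2)).symm
      _ ≤ 6 := by
          simpa using ENNReal.ofReal_le_ofReal sqrt_two_mul_pi_sq_div_eight_mul_le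
  exact ⟨(by gcongr : _ ≤ _).trans hbound, hbound⟩

end Stmt10
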